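/- arXiv:1205.5188 — 2 statements merged into one kernel-verified Lean document; each statement's English description precedes it below -/
import Mathlib

section
/- Fix 1 ≤ j ≤ N−1 and let b : I → ℂ^N be a solution of the toy model such that for some t₀ ∈ I one has b_k(t₀) = 0 for every k ∉ {j, j+1}. Then b_k(t) = 0 for every t ∈ I and every k ∉ {j, j+1}, and the pair (b_j, b_{j+1}) solves the two-mode system (d/dt) b_j = −i b_j² conj(b_j) + 2i conj(b_j) b_{j+1}², (d/dt) b_{j+1} = −i b_{j+1}² conj(b_{j+1}) + 2i conj(b_{j+1}) b_j². -/
/-!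
Every right-hand side of the toy model carries the factor `conj b_k`:
`ḃ_k = conj (b_k) · (-i b_k² + 2i (b_{k-1}² + b_{k+1}²))`. On a compact time interval the second
factor is bounded, so `‖ḃ_k‖ ≤ K ‖b_k‖` and Grönwall's inequality makes each coordinate hyperplane
`{b_k = 0}` invariant. Once `b_{j-1}` and `b_{j+2}` vanish identically, the equations for `b_j` and
`b_{j+1}` are the two-mode system.
-/

noncomputable section

open Complex

/-- right-hand side of the toy model ODE for the `j`-th mode (with the convention
`b 0 = b (N+1) = 0` built into the support condition of `IsToySolution`):
`ḃ_j = -i b_j² conj(b_j) + 2i conj(b_j) (b_{j-1}² + b_{j+1}²)`. -/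
def toyRHS (b : ℕ → ℂ) (j : ℕ) : ℂ :=
  -Complex.I * (b j) ^ 2 * (starRingEnd ℂ) (b j)
    + 2 * Complex.I * (starRingEnd ℂ) (b j) * ((b (j - 1)) ^ 2 + (b (j + 1)) ^ 2)

/-- `b` is a solution of the toy model with `N` modes on the time set `I`:
the modes are indexed by `j = 1, …, N`, all other indices carry the value `0`. -/
def IsToySolution (N : ℕ) (I : Set ℝ) (b : ℝ → ℕ → ℂ) : Prop :=
  (∀ t : ℝ, ∀ j : ℕ, j = 0 ∨ N < j → b t j = 0) ∧
  ∀ t ∈ I, ∀ j : ℕ, 1 ≤ j → j ≤ N →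
    HasDerivAt (fun s => b s j) (toyRHS (b t) j) t

open Set

section Gronwall

variable {E : Type*} [NormedAddCommGroup E] [NormedSpace ℝ E] {f f' : ℝ → E}

theorem eqOn_zero_Icc_of_norm_deriv_le_mul_norm {K a b c : ℝ} (hc : c ∈ Icc a b)
    (hf : ∀ x ∈ Icc a b, HasDerivAt f (f' x) x) (bound : ∀ x ∈ Icc a b, ‖f' x‖ ≤ K * ‖f x‖)
    (hfc : f c = 0) : EqOn f 0 (Icc a b) := by
  rw [← Icc_union_Icc_eq_Icc hc.1 hc.2]
  refine EqOn.union (fun x hx => ?_) fun x hx => ?_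
  · have hneg : ∀ y ∈ Icc (-c) (-a), -y ∈ Icc a b := fun y hy =>
      ⟨le_neg.mp hy.2, (neg_le.mp hy.1).trans hc.2⟩
    have hderiv : ∀ y ∈ Icc (-c) (-a), HasDerivAt (f ∘ Neg.neg) (-f' (-y)) y := fun y hy => by
      simpa using (hf (-y) (hneg y hy)).scomp y (hasDerivAt_neg y)
    have := eq_zero_of_abs_deriv_le_mul_abs_self_of_eq_zero_right (K := K)
      (fun y hy => (hderiv y hy).continuousAt.continuousWithinAt)
      (fun y hy => (hderiv y (Ico_subset_Icc_self hy)).hasDerivWithinAt) (by simpa using hfc)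
      (fun y hy => by simpa using bound (-y) (hneg y (Ico_subset_Icc_self hy)))
      (-x) ⟨neg_le_neg hx.2, neg_le_neg hx.1⟩
    simpa using this
  · have hsub : Icc c b ⊆ Icc a b := Icc_subset_Icc_left hc.1
    exact eq_zero_of_abs_deriv_le_mul_abs_self_of_eq_zero_right
      (fun y hy => (hf y (hsub hy)).continuousAt.continuousWithinAt)
      (fun y hy => (hf y (hsub (Ico_subset_Icc_self hy))).hasDerivWithinAt) hfc
      (fun y hy => bound y (hsub (Ico_subset_Icc_self hy))) x hx

theorem Set.OrdConnected.eqOn_zero_of_norm_deriv_le_mul_norm {I : Set ℝ} (hI : I.OrdConnected)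
    {g : ℝ → ℝ} (hg : ContinuousOn g I) (hf : ∀ x ∈ I, HasDerivAt f (f' x) x)
    (bound : ∀ x ∈ I, ‖f' x‖ ≤ g x * ‖f x‖) {t₀ : ℝ} (ht₀ : t₀ ∈ I) (hft₀ : f t₀ = 0) :
    EqOn f 0 I := by
  intro t ht
  have hsub : Icc (min t₀ t) (max t₀ t) ⊆ I :=
    hI.out (min_rec' (· ∈ I) ht₀ ht) (max_rec' (· ∈ I) ht₀ ht)
  obtain ⟨K, hK⟩ := isCompact_Icc.exists_bound_of_continuousOn (hg.mono hsub)
  refine eqOn_zero_Icc_of_norm_deriv_le_mul_norm (K := K) ⟨min_le_left _ _, le_max_left _ _⟩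
    (fun x hx => hf x (hsub hx)) (fun x hx => ?_) hft₀ ⟨min_le_right _ _, le_max_right _ _⟩
  calc ‖f' x‖ ≤ g x * ‖f x‖ := bound x (hsub hx)
    _ ≤ K * ‖f x‖ := by
      gcongr
      exact (le_abs_self _).trans (hK x hx)

end Gronwall

theorem toyRHS_eq_conj_mul (b : ℕ → ℂ) (k : ℕ) :
    toyRHS b k = starRingEnd ℂ (b k) *
      (-Complex.I * b k ^ 2 + 2 * Complex.I * (b (k - 1) ^ 2 + b (k + 1) ^ 2)) := by
  rw [toyRHS]
  ring

namespace IsToySolution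

variable {N : ℕ} {I : Set ℝ} {b : ℝ → ℕ → ℂ}

theorem hasDerivAt (hb : IsToySolution N I b) {t : ℝ} (ht : t ∈ I) (k : ℕ) :
    HasDerivAt (fun s => b s k) (toyRHS (b t) k) t := by
  by_cases hk : k = 0 ∨ N < k
  · have hzero : (fun s => b s k) = fun _ => 0 := funext fun s => hb.1 s k hk
    rw [hzero, toyRHS_eq_conj_mul, hb.1 t k hk, map_zero, zero_mul]
    exact hasDerivAt_const t 0
  · exact hb.2 t ht k (by omega) (by omega)

theorem continuousOn (hb : IsToySolution N I b) (k : ℕ) : ContinuousOn (fun s => b s k) I :=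
  fun _ ht => (hb.hasDerivAt ht k).continuousAt.continuousWithinAt

theorem mode_eq_zero_of_eq_zero (hb : IsToySolution N I b) (hI : I.OrdConnected) {t₀ : ℝ}
    (ht₀ : t₀ ∈ I) {k : ℕ} (hk : b t₀ k = 0) {t : ℝ} (ht : t ∈ I) : b t k = 0 := by
  refine hI.eqOn_zero_of_norm_deriv_le_mul_norm
    (g := fun s => ‖-Complex.I * b s k ^ 2 + 2 * Complex.I * (b s (k - 1) ^ 2 + b s (k + 1) ^ 2)‖)
    ?_ (fun s hs => hb.hasDerivAt hs k) (fun s _ => ?_) ht₀ hk ht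
  · have hmodes := hb.continuousOn
    fun_prop
  · rw [toyRHS_eq_conj_mul, norm_mul, RCLike.norm_conj, mul_comm]

end IsToySolution

theorem stmt11_general (N j : ℕ) (hj1 : 1 ≤ j)
    (I : Set ℝ) (hI : I.OrdConnected)
    (b : ℝ → ℕ → ℂ) (hb : IsToySolution N I b)
    (t₀ : ℝ) (ht₀ : t₀ ∈ I)
    (hzero : ∀ k : ℕ, k ≠ j → k ≠ j + 1 → b t₀ k = 0) :
    (∀ t ∈ I, ∀ k : ℕ, k ≠ j → k ≠ j + 1 → b t k = 0) ∧
    ∀ t ∈ I,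
      HasDerivAt (fun s => b s j)
        (-Complex.I * (b t j) ^ 2 * (starRingEnd ℂ) (b t j)
          + 2 * Complex.I * (starRingEnd ℂ) (b t j) * (b t (j + 1)) ^ 2) t ∧
      HasDerivAt (fun s => b s (j + 1))
        (-Complex.I * (b t (j + 1)) ^ 2 * (starRingEnd ℂ) (b t (j + 1))
          + 2 * Complex.I * (starRingEnd ℂ) (b t (j + 1)) * (b t j) ^ 2) t := by
  have hplane : ∀ t ∈ I, ∀ k : ℕ, k ≠ j → k ≠ j + 1 → b t k = 0 := fun t ht k hkj hkj' =>
    hb.mode_eq_zero_of_eq_zero hI ht₀ (hzero k hkj hkj') ht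
  refine ⟨hplane, fun t ht => ⟨?_, ?_⟩⟩
  · convert hb.hasDerivAt ht j using 1
    rw [toyRHS, hplane t ht (j - 1) (by omega) (by omega)]
    ring
  · convert hb.hasDerivAt ht (j + 1) using 1
    rw [toyRHS, Nat.add_sub_cancel, hplane t ht (j + 1 + 1) (by omega) (by omega)]
    ring

theorem stmt11 (N j : ℕ) (hj1 : 1 ≤ j) (hj2 : j + 1 ≤ N)
    (I : Set ℝ) (hI : I.OrdConnected)
    (b : ℝ → ℕ → ℂ) (hb : IsToySolution N I b)
    (t₀ : ℝ) (ht₀ : t₀ ∈ I)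
    (hzero : ∀ k : ℕ, k ≠ j → k ≠ j + 1 → b t₀ k = 0) :
    (∀ t ∈ I, ∀ k : ℕ, k ≠ j → k ≠ j + 1 → b t k = 0) ∧
    ∀ t ∈ I,
      HasDerivAt (fun s => b s j)
        (-Complex.I * (b t j) ^ 2 * (starRingEnd ℂ) (b t j)
          + 2 * Complex.I * (starRingEnd ℂ) (b t j) * (b t (j + 1)) ^ 2) t ∧
      HasDerivAt (fun s => b s (j + 1))
        (-Complex.I * (b t (j + 1)) ^ 2 * (starRingEnd ℂ) (b t (j + 1))
          + 2 * Complex.I * (starRingEnd ℂ) (b t (j + 1)) * (b t j) ^ 2) t :=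
  stmt11_general N j hj1 I hI b hb t₀ ht₀ hzero

end
end

section
/- Let α : I → ℓ¹(ℤ²;ℂ) be continuous in ℓ¹ and coordinatewise C¹, solving the resonant truncated system −i (d/dt) α_n = |n|² α_n + Σ_{(n₁,n₂,n₃)∈A₀(n)} α_{n₁} conj(α_{n₂}) α_{n₃} for every n ∈ ℤ², the sums converging absolutely. Then the ℓ²-norm ‖α(t)‖_{ℓ²} is constant on I. -/
/-! STATEMENT 13: conservation of the `ℓ²` norm for the resonant truncated system. -/

noncomputable section

open Complex

abbrev Z2 := ℤ × ℤ

/-- squared Euclidean norm of a frequency `n ∈ ℤ²` (as an integer) -/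
def sqz (n : Z2) : ℤ := n.1 ^ 2 + n.2 ^ 2

/-- `(n₁, n₂, n₃) ∈ A₀(n)` -/
def memA0 (n₁ n₂ n₃ n : Z2) : Prop :=
  n₁ - n₂ + n₃ = n ∧ sqz n₁ - sqz n₂ + sqz n₃ = sqz n

open scoped Classical in
/-- the `A₀(n)`-restricted cubic sum -/
def res0Sum (g : Z2 → ℂ) (n : Z2) : ℂ :=
  ∑' p : Z2 × Z2 × Z2,
    if memA0 p.1 p.2.1 p.2.2 n then
      g p.1 * (starRingEnd ℂ) (g p.2.1) * g p.2.2
    else 0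

/-!
The cubic term conserves the `ℓ²` norm because
`∑ₙ conj(αₙ) · ∑_{A₀(n)} α_{n₁} conj(α_{n₂}) α_{n₃}` is real: the relabelling
`(n, n₁, n₂, n₃) ↦ (n₃, n₂, n₁, n)` preserves the resonance conditions and conjugates the summand.
Hence `d/dt ∑_{n ∈ F} |αₙ|²` is minus the same sum over `n ∉ F`, which is small uniformly in `t`
on compact intervals: by Dini's theorem the `ℓ¹` tails of a continuous `ℓ¹`-valued curve are
uniformly small there. The mean value theorem then shows that `∑_{n ∈ F} |αₙ(t')|² - |αₙ(t)|²`
tends to `0` as `F` exhausts `ℤ²`.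
-/

open scoped ComplexConjugate
open Filter Topology Set

section Series

variable {β : Type*}

lemma hasSum_mul_mul {a : β → ℝ} (ha : Summable a) (h0 : ∀ n, 0 ≤ a n) :
    HasSum (fun p : β × β × β => a p.1 * (a p.2.1 * a p.2.2)) ((∑' n, a n) ^ 3) := by
  have h2 : HasSum (fun q : β × β => a q.1 * a q.2) ((∑' n, a n) * ∑' n, a n) :=
    ha.hasSum.mul ha.hasSum (ha.mul_of_nonneg ha h0 h0)
  have h3 := ha.hasSum.mul h2 (ha.mul_of_nonneg h2.summable h0 fun _ => mul_nonneg (h0 _) (h0 _))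
  rwa [← pow_three] at h3

lemma summable_sq_of_nonneg {a : β → ℝ} (ha : Summable a) (h0 : ∀ n, 0 ≤ a n) :
    Summable fun n => a n ^ 2 :=
  Summable.of_nonneg_of_le (fun n => sq_nonneg _)
    (fun n => by rw [sq]; exact mul_le_mul_of_nonneg_right (ha.le_tsum n fun j _ => h0 j) (h0 n))
    (ha.mul_left _)

variable {E : Type*} [NormedAddCommGroup E]

lemma abs_tsum_norm_sub_tsum_norm_le {f g : β → E} (hf : Summable (‖f ·‖))
    (hg : Summable (‖g ·‖)) : |∑' n, ‖f n‖ - ∑' n, ‖g n‖| ≤ ∑' n, ‖f n - g n‖ := by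
  have hfg : Summable fun n => ‖f n - g n‖ :=
    (hf.add hg).of_nonneg_of_le (fun _ => norm_nonneg _) fun n => norm_sub_le _ _
  rw [abs_sub_le_iff, ← hf.tsum_sub hg, ← hg.tsum_sub hf]
  constructor
  · exact (hf.sub hg).tsum_le_tsum (fun n => norm_sub_norm_le _ _) hfg
  · refine (hg.sub hf).tsum_le_tsum (fun n => ?_) hfg
    rw [norm_sub_rev (f n)]
    exact norm_sub_norm_le _ _

lemma continuousOn_tsum_norm {I : Set ℝ} {α : ℝ → β → E}
    (hl1 : ∀ t ∈ I, Summable (fun n => ‖α t n‖))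
    (hcont : ∀ t₀ ∈ I, ∀ ε : ℝ, 0 < ε → ∃ η : ℝ, 0 < η ∧
      ∀ t ∈ I, |t - t₀| < η → (∑' n, ‖α t n - α t₀ n‖) < ε) :
    ContinuousOn (fun t => ∑' n, ‖α t n‖) I := by
  refine Metric.continuousOn_iff.mpr fun t₀ ht₀ ε hε => ?_
  obtain ⟨η, hη, hclose⟩ := hcont t₀ ht₀ ε hε
  exact ⟨η, hη, fun t ht hdist =>
    (abs_tsum_norm_sub_tsum_norm_le (hl1 t ht) (hl1 t₀ ht₀)).trans_lt (hclose t ht hdist)⟩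

variable {X : Type*} {K : Set X}

lemma tendstoUniformlyOn_finset_sum_of_nonneg [TopologicalSpace X] (hK : IsCompact K)
    {g : X → β → ℝ} (h0 : ∀ s ∈ K, ∀ n, 0 ≤ g s n) (hg : ∀ s ∈ K, Summable (g s))
    (hcont : ∀ n, ContinuousOn (g · n) K) (hsum : ContinuousOn (fun s => ∑' n, g s n) K) :
    TendstoUniformlyOn (fun F s => ∑ n ∈ F, g s n) (fun s => ∑' n, g s n) atTop K :=
  Monotone.tendstoUniformlyOn_of_forall_tendsto hK
    (fun F => continuousOn_finsetSum F fun n _ => hcont n)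
    (fun s hs _ _ hFG => Finset.sum_le_sum_of_subset_of_nonneg hFG fun n _ _ => h0 s hs n)
    hsum (fun s hs => (hg s hs).hasSum)

lemma tendstoUniformlyOn_finset_sum_of_hasSum_zero {f g : X → β → ℝ}
    (hf : ∀ s ∈ K, HasSum (f s) 0) (hg : ∀ s ∈ K, Summable (g s))
    (hfg : ∀ s ∈ K, ∀ n, |f s n| ≤ g s n)
    (hunif : TendstoUniformlyOn (fun F s => ∑ n ∈ F, g s n) (fun s => ∑' n, g s n) atTop K) :
    TendstoUniformlyOn (fun F s => ∑ n ∈ F, f s n) 0 atTop K := by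
  rw [Metric.tendstoUniformlyOn_iff] at hunif ⊢
  intro ε hε
  filter_upwards [hunif ε hε] with F hF s hs
  have hfs := (hf s hs).summable
  have hgF : ∑ n ∈ F, g s n + ∑' n : ↥(↑F : Set β)ᶜ, g s n = ∑' n, g s n :=
    (hg s hs).sum_add_tsum_compl
  have hfF : ∑ n ∈ F, f s n = -∑' n : ↥(↑F : Set β)ᶜ, f s n := by
    rw [eq_neg_iff_add_eq_zero, hfs.sum_add_tsum_compl, (hf s hs).tsum_eq]
  have htail : ‖∑' n : ↥(↑F : Set β)ᶜ, f s n‖ ≤ ∑' n : ↥(↑F : Set β)ᶜ, g s n :=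
    tsum_of_norm_bounded ((hg s hs).subtype _).hasSum fun n => hfg s hs n
  have hdist := hF s hs
  rw [Real.dist_eq, ← hgF, add_sub_cancel_left] at hdist
  rw [Pi.zero_apply, dist_zero_left, hfF, norm_neg]
  exact (htail.trans (le_abs_self _)).trans_lt hdist

end Series

lemma tendsto_sub_of_tendstoUniformlyOn_deriv {ι : Type*} {l : Filter ι} {f f' : ι → ℝ → ℝ}
    {a b : ℝ} (hf : ∀ i, ∀ s ∈ uIcc a b, HasDerivAt (f i) (f' i s) s)
    (hf' : TendstoUniformlyOn f' 0 l (uIcc a b)) :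
    Tendsto (fun i => f i b - f i a) l (𝓝 0) := by
  rw [Metric.tendsto_nhds]
  intro ε hε
  have hδ : 0 < ε / (|b - a| + 1) := by positivity
  filter_upwards [Metric.tendstoUniformlyOn_iff.mp hf' _ hδ] with i hi
  have hmvt := Convex.norm_image_sub_le_of_norm_hasDerivWithin_le
    (fun s hs => (hf i s hs).hasDerivWithinAt)
    (fun s hs => by simpa using (hi s hs).le) (convex_uIcc a b) left_mem_uIcc right_mem_uIcc
  rw [dist_zero_right]
  calc ‖f i b - f i a‖ ≤ ε / (|b - a| + 1) * |b - a| := hmvt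
    _ < ε := by
      rw [div_mul_eq_mul_div, div_lt_iff₀ (by positivity)]
      nlinarith [abs_nonneg (b - a)]

section ResonantSum

variable {g : Z2 → ℂ}

lemma memA0_comm {n₁ n₂ n₃ n : Z2} : memA0 n₁ n₂ n₃ n ↔ memA0 n₂ n₁ n n₃ := by
  unfold memA0
  constructor <;> rintro ⟨h1, h2⟩ <;> exact ⟨by linear_combination -h1, by omega⟩

open scoped Classical in
def resTerm (g : Z2 → ℂ) (n : Z2) (p : Z2 × Z2 × Z2) : ℂ :=
  if memA0 p.1 p.2.1 p.2.2 n then g p.1 * conj (g p.2.1) * g p.2.2 else 0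

lemma norm_resTerm_le (g : Z2 → ℂ) (n : Z2) (p : Z2 × Z2 × Z2) :
    ‖resTerm g n p‖ ≤ ‖g p.1‖ * (‖g p.2.1‖ * ‖g p.2.2‖) := by
  unfold resTerm
  split_ifs
  · simp only [norm_mul, RCLike.norm_conj, mul_assoc, le_refl]
  · rw [norm_zero]
    positivity

lemma summable_norm_resTerm (hg : Summable (‖g ·‖)) (n : Z2) :
    Summable fun p => ‖resTerm g n p‖ :=
  (hasSum_mul_mul hg fun _ => norm_nonneg _).summable.of_nonneg_of_le (fun _ => norm_nonneg _)
    (norm_resTerm_le g n)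

lemma norm_res0Sum_le (hg : Summable (‖g ·‖)) (n : Z2) :
    ‖res0Sum g n‖ ≤ (∑' k, ‖g k‖) ^ 3 :=
  calc ‖res0Sum g n‖ ≤ ∑' p, ‖resTerm g n p‖ := norm_tsum_le_tsum_norm (summable_norm_resTerm hg n)
    _ ≤ ∑' p : Z2 × Z2 × Z2, ‖g p.1‖ * (‖g p.2.1‖ * ‖g p.2.2‖) :=
      (summable_norm_resTerm hg n).tsum_le_tsum (norm_resTerm_le g n)
        (hasSum_mul_mul hg fun _ => norm_nonneg _).summable
    _ = (∑' k, ‖g k‖) ^ 3 := (hasSum_mul_mul hg fun _ => norm_nonneg _).tsum_eq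

lemma abs_im_conj_mul_res0Sum_le (hg : Summable (‖g ·‖)) (n : Z2) :
    |(conj (g n) * res0Sum g n).im| ≤ (∑' k, ‖g k‖) ^ 3 * ‖g n‖ :=
  calc |(conj (g n) * res0Sum g n).im| ≤ ‖conj (g n) * res0Sum g n‖ := Complex.abs_im_le_norm _
    _ = ‖res0Sum g n‖ * ‖g n‖ := by rw [norm_mul, RCLike.norm_conj, mul_comm]
    _ ≤ (∑' k, ‖g k‖) ^ 3 * ‖g n‖ := by gcongr; exact norm_res0Sum_le hg n

lemma conj_conj_mul_resTerm (g : Z2 → ℂ) (n n₁ n₂ n₃ : Z2) :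
    conj (conj (g n) * resTerm g n (n₁, n₂, n₃)) = conj (g n₃) * resTerm g n₃ (n₂, n₁, n) := by
  unfold resTerm
  by_cases h : memA0 n₁ n₂ n₃ n
  · rw [if_pos h, if_pos (memA0_comm.mp h)]
    simp only [map_mul, Complex.conj_conj]
    ring
  · rw [if_neg h, if_neg (mt memA0_comm.mpr h)]
    simp

lemma hasSum_conj_mul_res0Sum (hg : Summable (‖g ·‖)) :
    HasSum (fun n => conj (g n) * res0Sum g n)
      (∑' q : Z2 × Z2 × Z2 × Z2, conj (g q.1) * resTerm g q.1 q.2) := by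
  have hbound : Summable fun q : Z2 × Z2 × Z2 × Z2 =>
      ‖g q.1‖ * (‖g q.2.1‖ * (‖g q.2.2.1‖ * ‖g q.2.2.2‖)) :=
    hg.mul_of_nonneg (hasSum_mul_mul hg fun _ => norm_nonneg _).summable (fun _ => norm_nonneg _)
      fun _ => by positivity
  have hsum : Summable fun q : Z2 × Z2 × Z2 × Z2 => conj (g q.1) * resTerm g q.1 q.2 :=
    hbound.of_norm_bounded fun q => by
      rw [norm_mul, RCLike.norm_conj]
      exact mul_le_mul_of_nonneg_left (norm_resTerm_le g q.1 q.2) (norm_nonneg _)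
  exact hsum.hasSum.prod_fiberwise fun n =>
    ((summable_norm_resTerm hg n).of_norm.hasSum).mul_left (conj (g n))

lemma hasSum_im_conj_mul_res0Sum (hg : Summable (‖g ·‖)) :
    HasSum (fun n => (conj (g n) * res0Sum g n).im) 0 := by
  let reverse : Equiv.Perm (Z2 × Z2 × Z2 × Z2) :=
    Function.Involutive.toPerm (fun q => (q.2.2.2, q.2.2.1, q.2.1, q.1)) fun _ => rfl
  have hreal : conj (∑' q : Z2 × Z2 × Z2 × Z2, conj (g q.1) * resTerm g q.1 q.2)
      = ∑' q : Z2 × Z2 × Z2 × Z2, conj (g q.1) * resTerm g q.1 q.2 := by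
    rw [Complex.conj_tsum]
    conv_rhs => rw [← reverse.tsum_eq]
    exact tsum_congr fun ⟨n, n₁, n₂, n₃⟩ => conj_conj_mul_resTerm g n n₁ n₂ n₃
  have h := Complex.imCLM.hasSum (hasSum_conj_mul_res0Sum hg)
  rwa [Complex.imCLM_apply, Complex.conj_eq_iff_im.mp hreal] at h

end ResonantSum

lemma hasDerivAt_norm_sq_of_hasDerivAt_I_mul {c : ℝ → ℂ} {t : ℝ} {m : ℤ} {R : ℂ}
    (h : HasDerivAt c (Complex.I * ((m : ℂ) * c t + R)) t) :
    HasDerivAt (fun s => ‖c s‖ ^ 2) (-2 * (conj (c t) * R).im) t := by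
  convert h.norm_sq using 1
  simp only [Complex.inner, Complex.mul_re, Complex.mul_im, Complex.add_re, Complex.add_im,
    Complex.I_re, Complex.I_im, Complex.conj_re, Complex.conj_im, Complex.intCast_re,
    Complex.intCast_im]
  ring

lemma tendstoUniformlyOn_finset_sum_im_conj_mul_res0Sum {X : Type*} [TopologicalSpace X]
    {K : Set X} (hK : IsCompact K) {α : X → Z2 → ℂ} (hl1 : ∀ s ∈ K, Summable (‖α s ·‖))
    (hN : ContinuousOn (fun s => ∑' n, ‖α s n‖) K) (hα : ∀ n, ContinuousOn (α · n) K) :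
    TendstoUniformlyOn (fun F s => ∑ n ∈ F, -2 * (conj (α s n) * res0Sum (α s) n).im) 0
      atTop K := by
  have hN3 : ContinuousOn (fun s => 2 * (∑' n, ‖α s n‖) ^ 3) K := continuousOn_const.mul (hN.pow 3)
  refine tendstoUniformlyOn_finset_sum_of_hasSum_zero
    (fun s hs => by simpa using (hasSum_im_conj_mul_res0Sum (hl1 s hs)).mul_left (-2))
    (fun s hs => (hl1 s hs).mul_left (2 * (∑' n, ‖α s n‖) ^ 3)) (fun s hs n => ?_)
    (tendstoUniformlyOn_finset_sum_of_nonneg hK (fun s _ n => by positivity)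
      (fun s hs => (hl1 s hs).mul_left _) (fun n => hN3.mul (hα n).norm)
      ((hN3.mul hN).congr fun s _ => tsum_mul_left))
  rw [abs_mul, abs_neg, abs_two, mul_assoc]
  gcongr
  exact abs_im_conj_mul_res0Sum_le (hl1 s hs) n

open scoped Classical in
theorem stmt13_general (I : Set ℝ) (hI : I.OrdConnected) (α : ℝ → Z2 → ℂ)
    -- `α(t) ∈ ℓ¹` and `α` is continuous in `ℓ¹` on `I`
    (hl1 : ∀ t ∈ I, Summable (fun n : Z2 => ‖α t n‖))
    (hcont : ∀ t₀ ∈ I, ∀ ε : ℝ, 0 < ε → ∃ η : ℝ, 0 < η ∧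
      ∀ t ∈ I, |t - t₀| < η → (∑' n : Z2, ‖α t n - α t₀ n‖) < ε)
    -- `α` is coordinatewise `C¹` and solves the resonant truncated system
    (hode : ∀ t ∈ I, ∀ n : Z2,
      HasDerivAt (fun s => α s n)
        (Complex.I * ((sqz n : ℂ) * α t n + res0Sum (α t) n)) t) :
    ∀ t ∈ I, ∀ t' ∈ I, (∑' n : Z2, ‖α t n‖ ^ 2) = ∑' n : Z2, ‖α t' n‖ ^ 2 := by
  intro t ht t' ht'
  have hK : uIcc t t' ⊆ I := hI.uIcc_subset ht ht'
  have hN : ContinuousOn (fun s => ∑' n, ‖α s n‖) (uIcc t t') :=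
    (continuousOn_tsum_norm hl1 hcont).mono hK
  have hflux := tendstoUniformlyOn_finset_sum_im_conj_mul_res0Sum isCompact_uIcc
    (fun s hs => hl1 s (hK hs)) hN fun n s hs => (hode s (hK hs) n).continuousAt.continuousWithinAt
  have hlim := tendsto_sub_of_tendstoUniformlyOn_deriv
    (f := fun F s => ∑ n ∈ F, ‖α s n‖ ^ 2)
    (fun F s hs => HasDerivAt.fun_sum fun n _ =>
      hasDerivAt_norm_sq_of_hasDerivAt_I_mul (hode s (hK hs) n)) hflux
  have hS : ∀ s ∈ I, HasSum (fun n => ‖α s n‖ ^ 2) (∑' n, ‖α s n‖ ^ 2) := fun s hs =>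
    (summable_sq_of_nonneg (hl1 s hs) fun _ => norm_nonneg _).hasSum
  exact (sub_eq_zero.mp (tendsto_nhds_unique (Tendsto.sub (hS t' ht') (hS t ht)) hlim)).symm

open scoped Classical in
theorem stmt13 (I : Set ℝ) (hI : I.OrdConnected) (α : ℝ → Z2 → ℂ)
    -- `α(t) ∈ ℓ¹` and `α` is continuous in `ℓ¹` on `I`
    (hl1 : ∀ t ∈ I, Summable (fun n : Z2 => ‖α t n‖))
    (hcont : ∀ t₀ ∈ I, ∀ ε : ℝ, 0 < ε → ∃ η : ℝ, 0 < η ∧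
      ∀ t ∈ I, |t - t₀| < η → (∑' n : Z2, ‖α t n - α t₀ n‖) < ε)
    -- the resonant cubic sums converge absolutely
    (habs : ∀ t ∈ I, ∀ n : Z2, Summable (fun p : Z2 × Z2 × Z2 =>
      ‖if memA0 p.1 p.2.1 p.2.2 n then
          α t p.1 * (starRingEnd ℂ) (α t p.2.1) * α t p.2.2
        else 0‖))
    -- `α` is coordinatewise `C¹` and solves the resonant truncated system
    (hode : ∀ t ∈ I, ∀ n : Z2,
      HasDerivAt (fun s => α s n)
        (Complex.I * ((sqz n : ℂ) * α t n + res0Sum (α t) n)) t) :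
    ∀ t ∈ I, ∀ t' ∈ I, (∑' n : Z2, ‖α t n‖ ^ 2) = ∑' n : Z2, ‖α t' n‖ ^ 2 :=
  stmt13_general I hI α hl1 hcont hode
end
end
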